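/- Let G be a simple graph, v a vertex of G, and suppose ξ(G) ≥ ξ(G∖[v]) (which holds since G∖[v] is a subgraph of G). Then I(G∖v, x) ≥ I(G,x) for every x ∈ [ξ(G), 0], i.e., G ⪰ G∖v. -/

import Mathlib

open Finset

open scoped Classical in
/-- The independence polynomial of `G` evaluated at `x`:
`I(G,x)` is the sum of `x^|s|` over all independent sets `s` of `G`. -/
noncomputable def indepPoly {V : Type*} [Fintype V] (G : SimpleGraph V) (x : ℝ) : ℝ :=
  ∑ s ∈ (Finset.univ : Finset (Finset V)).filter
      (fun s => ∀ u ∈ s, ∀ v ∈ s, ¬ G.Adj u v), x ^ s.card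

/-- `ξ` is the largest real root of the independence polynomial of `G`. -/
noncomputable def IsLargestRoot {V : Type*} [Fintype V] (G : SimpleGraph V) (ξ : ℝ) : Prop :=
  indepPoly G ξ = 0 ∧ ∀ y : ℝ, indepPoly G y = 0 → y ≤ ξ

open scoped Classical in
lemma indepPoly_induce {V : Type*} [Fintype V] (G : SimpleGraph V) (S : Set V) [Fintype S] (x : ℝ) :
    indepPoly (G.induce S) x =
      ∑ s ∈ (Finset.univ : Finset (Finset V)).filter
          (fun s : Finset V => (∀ u ∈ s, u ∈ S) ∧ ∀ u ∈ s, ∀ w ∈ s, ¬ G.Adj u w), x ^ s.card := by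
  unfold indepPoly
  refine Finset.sum_nbij' (fun t => t.map (Function.Embedding.subtype _))
    (fun s => s.subtype (· ∈ S)) ?_ ?_ ?_ ?_ ?_
  · intro t ht
    simp only [mem_filter, mem_univ, true_and] at ht ⊢
    constructor
    · intro u hu
      simp only [Finset.mem_map, Function.Embedding.coe_subtype] at hu
      obtain ⟨a, _, rfl⟩ := hu
      exact a.2
    · intro u hu w hw hadj
      simp only [Finset.mem_map, Function.Embedding.coe_subtype] at hu hw
      obtain ⟨a, ha, rfl⟩ := hu
      obtain ⟨b, hb, rfl⟩ := hw
      exact ht a ha b hb (by simpa using hadj)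
  · intro s hs
    simp only [mem_filter, mem_univ, true_and] at hs ⊢
    intro u hu w hw hadj
    rw [Finset.mem_subtype] at hu hw
    exact hs.2 u hu w hw (by simpa using hadj)
  · intro t ht
    ext a
    simp [Finset.mem_subtype]
  · intro s hs
    simp only [mem_filter, mem_univ, true_and] at hs
    exact Finset.subtype_map_of_mem hs.1
  · intro t ht
    rw [Finset.card_map]

open scoped Classical in
lemma indepPoly_zero {V : Type*} [Fintype V] (G : SimpleGraph V) :
    indepPoly G 0 = 1 := by
  unfold indepPoly
  rw [Finset.sum_eq_single (∅ : Finset V)]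
  · simp
  · intro s hs hne
    rw [zero_pow]
    simpa using hne
  · intro h
    exact absurd (by simp) h

lemma indepPoly_continuous {V : Type*} [Fintype V] (G : SimpleGraph V) :
    Continuous (indepPoly G) := by
  unfold indepPoly
  exact continuous_finset_sum _ (fun s _ => continuous_pow _)

open scoped Classical in
lemma indepPoly_recursion {V : Type*} [Fintype V] (G : SimpleGraph V) (v : V) (x : ℝ) :
    indepPoly G x = indepPoly (G.induce {u | u ≠ v}) x
      + x * indepPoly (G.induce (({v} ∪ G.neighborSet v)ᶜ)) x := by
  rw [indepPoly_induce, indepPoly_induce]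
  unfold indepPoly
  rw [← Finset.sum_filter_add_sum_filter_not
    ((Finset.univ : Finset (Finset V)).filter (fun s => ∀ u ∈ s, ∀ w ∈ s, ¬ G.Adj u w))
    (fun s => v ∉ s)]
  congr 1
  · apply Finset.sum_congr _ (fun _ _ => rfl)
    ext s
    simp only [mem_filter, mem_univ, true_and]
    constructor
    · rintro ⟨hind, hv⟩
      exact ⟨fun u hu => by simp only [Set.mem_setOf_eq]; rintro rfl; exact hv hu, hind⟩
    · rintro ⟨hsub, hind⟩
      exact ⟨hind, fun hv => (hsub v hv) rfl⟩
  · rw [Finset.mul_sum]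
    refine Finset.sum_nbij' (fun s => s.erase v) (fun s => insert v s) ?_ ?_ ?_ ?_ ?_
    · intro s hs
      simp only [mem_filter, mem_univ, true_and, not_not] at hs ⊢
      obtain ⟨hind, hv⟩ := hs
      refine ⟨?_, fun u hu w hw => hind u (Finset.mem_of_mem_erase hu) w (Finset.mem_of_mem_erase hw)⟩
      intro u hu
      obtain ⟨huv, hus⟩ := Finset.mem_erase.mp hu
      simp only [Set.mem_compl_iff, Set.mem_union, Set.mem_singleton_iff, SimpleGraph.mem_neighborSet]
      push_neg
      exact ⟨huv, fun hadj => hind v hv u hus hadj⟩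
    · intro s hs
      simp only [mem_filter, mem_univ, true_and, not_not] at hs ⊢
      obtain ⟨hsub, hind⟩ := hs
      have hvs : v ∉ s := by
        intro hv
        have := hsub v hv
        simp at this
      refine ⟨?_, Finset.mem_insert_self v s⟩
      intro u hu w hw hadj
      rcases Finset.mem_insert.mp hu with rfl | hu'
      · rcases Finset.mem_insert.mp hw with rfl | hw'
        · exact G.loopless.irrefl _ hadj
        · have := hsub w hw'
          simp only [Set.mem_compl_iff, Set.mem_union, Set.mem_singleton_iff,
            SimpleGraph.mem_neighborSet] at this
          exact this (Or.inr hadj)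
      · rcases Finset.mem_insert.mp hw with rfl | hw'
        · have := hsub u hu'
          simp only [Set.mem_compl_iff, Set.mem_union, Set.mem_singleton_iff,
            SimpleGraph.mem_neighborSet] at this
          exact this (Or.inr hadj.symm)
        · exact hind u hu' w hw' hadj
    · intro s hs
      simp only [mem_filter, mem_univ, true_and, not_not] at hs
      exact Finset.insert_erase hs.2
    · intro s hs
      simp only [mem_filter, mem_univ, true_and] at hs
      apply Finset.erase_insert
      intro hv
      have := hs.1 v hv
      simp at this
    · intro s hs
      simp only [mem_filter, mem_univ, true_and, not_not] at hs
      rw [Finset.card_erase_of_mem hs.2]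
      have : s.card ≠ 0 := Finset.card_ne_zero_of_mem hs.2
      rw [← pow_succ']
      congr 1
      omega

lemma indepPoly_nonneg {V : Type*} [Fintype V] (H : SimpleGraph V) (ξ : ℝ)
    (hξ : IsLargestRoot H ξ) {y : ℝ} (hy : ξ ≤ y) (hy0 : y ≤ 0) :
    0 ≤ indepPoly H y := by
  by_contra h
  push_neg at h
  have h0 : indepPoly H 0 = 1 := indepPoly_zero H
  have hIV := intermediate_value_Icc hy0 (indepPoly_continuous H).continuousOn
  have : (0 : ℝ) ∈ Set.Icc (indepPoly H y) (indepPoly H 0) := by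
    constructor
    · exact le_of_lt h
    · rw [h0]; norm_num
  obtain ⟨z, hz, hz0⟩ := hIV this
  have hzle : z ≤ ξ := hξ.2 z hz0
  have : z = y := le_antisymm (hzle.trans hy) hz.1
  rw [← this, hz0] at h
  exact lt_irrefl 0 h

open scoped Classical in
/-- If `ξ(G) ≥ ξ(G∖[v])`, then `I(G∖v,x) ≥ I(G,x)` on `[ξ(G),0]`, i.e. `G ⪰ G∖v`. -/
theorem indepOrder_deleteVertex {V : Type*} [Fintype V] (G : SimpleGraph V) (v : V)
    (ξG ξN : ℝ) (hG : IsLargestRoot G ξG)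
    (hN : IsLargestRoot (G.induce (({v} ∪ G.neighborSet v)ᶜ)) ξN)
    (hle : ξN ≤ ξG) :
    ∀ x ∈ Set.Icc ξG (0 : ℝ),
      indepPoly G x ≤ indepPoly (G.induce {u | u ≠ v}) x := by
  intro x hx
  obtain ⟨hx1, hx2⟩ := hx
  rw [indepPoly_recursion G v x]
  have hnn : 0 ≤ indepPoly (G.induce (({v} ∪ G.neighborSet v)ᶜ)) x :=
    indepPoly_nonneg _ ξN hN (hle.trans hx1) hx2
  nlinarith
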